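/- The third y-derivative of W(y,ν,λ) equals 12ν²λ(2ν²λy + ν² + λ² − 1), and hence the second y-derivative attains its minimum over y ∈ ℝ at y₃ := (1−ν²−λ²)/(2ν²λ), with minimum value (1+ν+λ)(1+ν−λ)(λ²(3−2ν) − (1−ν)²(3+2ν)). -/

import Mathlib

/-! `W` is a quartic in `y` with leading coefficient `λ²ν⁴ > 0`, so `∂²W/∂y²` is an upward parabola
whose vertex, the zero of `∂³W/∂y³`, is `y₃`. -/

noncomputable def W (v l y : ℝ) : ℝ :=
  l^2*v^4*y^4 + 2*l*v^2*(l^2 + v^2 - 1)*y^3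
    - v*(1 - 2*v*l^2 - l^4 + v^4 - 2*v^2)*y^2
    + 2*v*l*(1 + l^2 - v^2)*y + l^2

lemma deriv_quadratic (a b c : ℝ) :
    deriv (fun y : ℝ => a*y^2 + b*y + c) = fun y => 2*a*y + b := by
  funext y
  refine ((((hasDerivAt_pow 2 y).const_mul a).add
    ((hasDerivAt_id y).const_mul b)).add_const c).deriv.trans ?_
  push_cast; ring

lemma deriv_cubic (a b c d : ℝ) :
    deriv (fun y : ℝ => a*y^3 + b*y^2 + c*y + d) = fun y => 3*a*y^2 + 2*b*y + c := by
  funext y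
  refine (((((hasDerivAt_pow 3 y).const_mul a).add ((hasDerivAt_pow 2 y).const_mul b)).add
    ((hasDerivAt_id y).const_mul c)).add_const d).deriv.trans ?_
  push_cast; ring

lemma deriv_quartic (a b c d e : ℝ) :
    deriv (fun y : ℝ => a*y^4 + b*y^3 + c*y^2 + d*y + e)
      = fun y => 4*a*y^3 + 3*b*y^2 + 2*c*y + d := by
  funext y
  refine ((((((hasDerivAt_pow 4 y).const_mul a).add ((hasDerivAt_pow 3 y).const_mul b)).add
    ((hasDerivAt_pow 2 y).const_mul c)).add ((hasDerivAt_id y).const_mul d)).add_const e).deriv.trans ?_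
  push_cast; ring

lemma deriv_deriv_quartic (a b c d e : ℝ) :
    deriv (deriv (fun y : ℝ => a*y^4 + b*y^3 + c*y^2 + d*y + e))
      = fun y => 12*a*y^2 + 6*b*y + 2*c := by
  rw [deriv_quartic, deriv_cubic]
  funext y; ring

lemma deriv_deriv_deriv_quartic (a b c d e : ℝ) :
    deriv (deriv (deriv (fun y : ℝ => a*y^4 + b*y^3 + c*y^2 + d*y + e)))
      = fun y => 24*a*y + 6*b := by
  rw [deriv_deriv_quartic, deriv_quadratic]
  funext y; ring

lemma quadratic_le_of_vertex {A B C x₀ : ℝ} (hA : 0 < A) (hx₀ : 2*A*x₀ + B = 0) (y : ℝ) :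
    A*x₀^2 + B*x₀ + C ≤ A*y^2 + B*y + C := by
  have hsq : 0 ≤ A*(y - x₀)^2 := mul_nonneg hA.le (sq_nonneg _)
  have hdiff : A*y^2 + B*y + C - (A*x₀^2 + B*x₀ + C) = A*(y - x₀)^2 + (y - x₀)*(2*A*x₀ + B) := by
    ring
  rw [hx₀, mul_zero, add_zero] at hdiff
  linarith

lemma W_eq_quartic (v l : ℝ) :
    (fun y => W v l y) = fun y => (l^2*v^4)*y^4 + (2*l*v^2*(l^2 + v^2 - 1))*y^3
      + (-(v*(1 - 2*v*l^2 - l^4 + v^4 - 2*v^2)))*y^2 + (2*v*l*(1 + l^2 - v^2))*y + l^2 := by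
  funext y; unfold W; ring

theorem stmt8_general (v l : ℝ) (hv0 : 0 < v) (hl : 0 < l) :
    (∀ y : ℝ, deriv (deriv (deriv (fun y => W v l y))) y
        = 12*v^2*l*(2*v^2*l*y + v^2 + l^2 - 1)) ∧
    (∀ y : ℝ, deriv (deriv (fun y => W v l y)) ((1 - v^2 - l^2)/(2*v^2*l))
        ≤ deriv (deriv (fun y => W v l y)) y) ∧
    deriv (deriv (fun y => W v l y)) ((1 - v^2 - l^2)/(2*v^2*l))
        = (1 + v + l)*(1 + v - l)*(l^2*(3 - 2*v) - (1 - v)^2*(3 + 2*v)) := by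
  rw [W_eq_quartic, deriv_deriv_deriv_quartic, deriv_deriv_quartic]
  have hv : v ≠ 0 := hv0.ne'
  have hl' : l ≠ 0 := hl.ne'
  refine ⟨fun y => by ring, quadratic_le_of_vertex (by positivity) ?_, ?_⟩
  · field_simp; ring
  · field_simp; ring

theorem stmt8 (v l : ℝ) (hv0 : 0 < v) (hv1 : v < 1) (hl : 0 < l) :
    (∀ y : ℝ, deriv (deriv (deriv (fun y => W v l y))) y
        = 12*v^2*l*(2*v^2*l*y + v^2 + l^2 - 1)) ∧
    (∀ y : ℝ, deriv (deriv (fun y => W v l y)) ((1 - v^2 - l^2)/(2*v^2*l))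
        ≤ deriv (deriv (fun y => W v l y)) y) ∧
    deriv (deriv (fun y => W v l y)) ((1 - v^2 - l^2)/(2*v^2*l))
        = (1 + v + l)*(1 + v - l)*(l^2*(3 - 2*v) - (1 - v)^2*(3 + 2*v)) :=
  stmt8_general v l hv0 hl
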